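/- arXiv:2512.01429 — 2 statements merged into one kernel-verified Lean document; each statement's English description precedes it below -/
import Mathlib

section
/- Let X be a sum of independent Bernoulli random variables with E[X] ≥ 2 + 1/5. Then E[min(X, 25)] ≥ 2. -/
/-!
Choose a subfamily `T` whose means add up to `m ∈ [11/5, 16/5]` (possible because each mean is
at most `1`) and let `S = ∑ i ∈ T, X i`. As `S` is integer-valued and `S ≤ ∑ i, X i`, we have
`g S ≤ min (∑ i, X i) 25` for the parabola `g s = (96 s - s²) / 95`, which lies below `s` at the
integers and below `25` everywhere (its maximum is `48² / 95`).
Independence gives `Var S ≤ 𝔼 S`, hence `𝔼 (g S) ≥ m - m² / 95 ≥ 2` on that range of `m`.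
-/

open MeasureTheory ProbabilityTheory

theorem Finset.exists_subset_sum_mem_Icc {α β : Type*} [AddCommGroup β] [LinearOrder β]
    [IsOrderedAddMonoid β] {f : α → β} {a c : β} (hac : 0 ≤ a + c) (s : Finset α)
    (hf : ∀ i ∈ s, f i ≤ c) (ha : a ≤ ∑ i ∈ s, f i) :
    ∃ t ⊆ s, ∑ i ∈ t, f i ∈ Set.Icc a (a + c) := by
  classical
  induction s using Finset.strongInduction with
  | H s ih =>
    by_cases hs : ∑ i ∈ s, f i ≤ a + c
    · exact ⟨s, subset_rfl, ha, hs⟩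
    obtain ⟨i, hi⟩ : s.Nonempty := Finset.nonempty_iff_ne_empty.2 fun h => hs (by simpa [h])
    have herase : a ≤ ∑ j ∈ s.erase i, f j := by
      rw [Finset.sum_erase_eq_sub hi, le_sub_iff_add_le]
      exact (add_le_add_right (hf i hi) a).trans (not_le.1 hs).le
    obtain ⟨t, hts, ht⟩ := ih (s.erase i) (Finset.erase_ssubset hi)
      (fun j hj => hf j (Finset.mem_of_mem_erase hj)) herase
    exact ⟨t, hts.trans (Finset.erase_subset i s), ht⟩

theorem Finset.exists_sum_eq_natCast {α R : Type*} [Semiring R] {x : α → R} (s : Finset α)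
    (hx : ∀ i ∈ s, x i = 0 ∨ x i = 1) : ∃ k : ℕ, ∑ i ∈ s, x i = k :=
  Finset.sum_induction x (fun r => ∃ k : ℕ, r = k)
    (fun _ _ ⟨k, hk⟩ ⟨l, hl⟩ => ⟨k + l, by rw [Nat.cast_add, hk, hl]⟩) ⟨0, Nat.cast_zero.symm⟩
    fun i hi => (hx i hi).elim (fun h => ⟨0, by rw [h, Nat.cast_zero]⟩)
      fun h => ⟨1, by rw [h, Nat.cast_one]⟩

theorem parabola_le_min_of_natCast_le (k : ℕ) {y : ℝ} (hky : (k : ℝ) ≤ y) :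
    (96 * k - (k : ℝ) ^ 2) / 95 ≤ min y 25 := by
  have hk : (k : ℝ) ≤ (k : ℝ) ^ 2 := by
    rcases k with _ | k
    · simp
    · push_cast; nlinarith
  refine le_min ?_ ?_ <;> rw [div_le_iff₀ (by norm_num)] <;> nlinarith [sq_nonneg ((k : ℝ) - 48)]

section Variance

variable {Ω : Type*} [MeasurableSpace Ω] {μ : Measure Ω} [IsProbabilityMeasure μ]

theorem variance_sum_le_integral_sum {ι : Type*} {X : ι → Ω → ℝ} {s : Finset ι}
    (hX : ∀ i ∈ s, AEMeasurable (X i) μ) (h01 : ∀ i ∈ s, ∀ᵐ ω ∂μ, X i ω ∈ Set.Icc 0 1)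
    (hindep : Set.Pairwise ↑s fun i j => X i ⟂ᵢ[μ] X j) :
    Var[∑ i ∈ s, X i; μ] ≤ μ[∑ i ∈ s, X i] := by
  have hL2 : ∀ i ∈ s, MemLp (X i) 2 μ := fun i hi =>
    memLp_of_bounded (h01 i hi) (hX i hi).aestronglyMeasurable 2
  simp_rw [Finset.sum_apply]
  rw [IndepFun.variance_sum hL2 hindep,
    integral_finsetSum s fun i hi => (hL2 i hi).integrable one_le_two]
  refine Finset.sum_le_sum fun i hi => ?_
  calc Var[X i; μ] ≤ (1 - μ[X i]) * (μ[X i] - 0) := variance_le_sub_mul_sub (h01 i hi) (hX i hi)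
    _ ≤ μ[X i] := by nlinarith [sq_nonneg μ[X i]]

theorem sub_sq_div_le_integral_parabola {S : Ω → ℝ} (hS : MemLp S 2 μ)
    (hvar : Var[S; μ] ≤ μ[S]) {c : ℝ} (hc : 0 < c) :
    μ[S] - μ[S] ^ 2 / c ≤ ∫ ω, ((c + 1) * S ω - S ω ^ 2) / c ∂μ := by
  rw [variance_eq_sub hS] at hvar
  rw [integral_div, integral_sub ((hS.integrable one_le_two).const_mul _) hS.integrable_sq,
    integral_const_mul, le_div_iff₀ hc, sub_mul, div_mul_cancel₀ _ hc.ne']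
  have : ∫ ω, S ω ^ 2 ∂μ = μ[S ^ 2] := rfl
  linarith

end Variance

/-- Let `X` be a sum of independent Bernoulli random variables with `E[X] ≥ 2 + 1/5`.
Then `E[min(X, 25)] ≥ 2`. -/
theorem stmt0 {Ω : Type*} [MeasurableSpace Ω] (μ : Measure Ω) [IsProbabilityMeasure μ]
    {n : ℕ} (X : Fin n → Ω → ℝ)
    (hmeas : ∀ i, Measurable (X i))
    (hBer : ∀ i, ∀ᵐ ω ∂μ, X i ω = 0 ∨ X i ω = 1)
    (hindep : iIndepFun X μ)
    (hE : 2 + 1/5 ≤ ∫ ω, ∑ i, X i ω ∂μ) :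
    2 ≤ ∫ ω, min (∑ i, X i ω) 25 ∂μ := by
  have h01 : ∀ i, ∀ᵐ ω ∂μ, X i ω ∈ Set.Icc 0 1 := fun i =>
    (hBer i).mono fun ω h => h.elim (fun h => by simp [h]) fun h => by simp [h]
  have hL2 : ∀ i, MemLp (X i) 2 μ := fun i =>
    memLp_of_bounded (h01 i) (hmeas i).aestronglyMeasurable 2
  have hint : ∀ i, Integrable (X i) μ := fun i => (hL2 i).integrable one_le_two
  have hp1 : ∀ i, μ[X i] ≤ 1 := fun i =>
    (integral_mono_ae (hint i) (integrable_const 1) ((h01 i).mono fun _ h => h.2)).trans_eq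
      (by simp)
  rw [integral_finsetSum _ fun i _ => hint i] at hE
  obtain ⟨T, -, hm⟩ := Finset.univ.exists_subset_sum_mem_Icc (f := fun i => μ[X i]) (c := 1)
    (by norm_num) (fun i _ => hp1 i) hE
  set S : Ω → ℝ := ∑ i ∈ T, X i with hS
  have hSm : μ[S] = ∑ i ∈ T, μ[X i] := by
    simp_rw [hS, Finset.sum_apply]
    exact integral_finsetSum T fun i _ => hint i
  have hSL2 : MemLp S 2 μ := memLp_finsetSum' T fun i _ => hL2 i
  have hvar : Var[S; μ] ≤ μ[S] :=
    variance_sum_le_integral_sum (fun i _ => (hmeas i).aemeasurable) (fun i _ => h01 i)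
      fun i _ j _ hij => hindep.indepFun hij
  have hpointwise : ∀ᵐ ω ∂μ, ((95 + 1) * S ω - S ω ^ 2) / 95 ≤ min (∑ i, X i ω) 25 := by
    filter_upwards [ae_all_iff.2 hBer, ae_all_iff.2 h01] with ω hω h01ω
    obtain ⟨k, hk⟩ := T.exists_sum_eq_natCast fun i _ => hω i
    have hkX : (k : ℝ) ≤ ∑ i, X i ω := hk ▸
      Finset.sum_le_sum_of_subset_of_nonneg T.subset_univ fun i _ _ => (h01ω i).1
    rw [hS, Finset.sum_apply, hk]
    norm_num only
    exact parabola_le_min_of_natCast_le k hkX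
  calc (2 : ℝ) ≤ μ[S] - μ[S] ^ 2 / 95 := by
        rw [hSm]; obtain ⟨h1, h2⟩ := hm; norm_num at h1 h2; nlinarith
    _ ≤ ∫ ω, ((95 + 1) * S ω - S ω ^ 2) / 95 ∂μ :=
        sub_sq_div_le_integral_parabola hSL2 hvar (by norm_num)
    _ ≤ ∫ ω, min (∑ i, X i ω) 25 ∂μ := by
        refine integral_mono_ae ?_ ?_ hpointwise
        · exact (((hSL2.integrable one_le_two).const_mul _).sub hSL2.integrable_sq).div_const 95
        · exact (integrable_finsetSum _ fun i _ => hint i).inf (integrable_const 25)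
end

section
/- Let n ≥ 4 and let T_1, ..., T_n be subsets of {1,...,n}, each of size at least √n. Then there exists a subset S of {1,...,n} of size ⌊2√n⌋ such that the union ∪_{i∈S} T_i intersects T_j for every j ∈ {1,...,n}. -/
/-!
Take a maximal subfamily `S` of pairwise disjoint sets `T i`. By maximality every `T j` meets
some `T i` with `i ∈ S`, and disjointness gives `|S| √n ≤ ∑_{i ∈ S} |T i| ≤ n`, so
`|S| ≤ √n ≤ ⌊2√n⌋ ≤ n`. Any superset of `S` of size `⌊2√n⌋` still hits every `T j`.
-/

open Finset

section DisjointSubfamily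

variable {ι α : Type*} [DecidableEq α] (T : ι → Finset α)

theorem exists_pairwiseDisjoint_forall_biUnion_inter_nonempty [Fintype ι]
    (hT : ∀ i, (T i).Nonempty) :
    ∃ S : Finset ι, (S : Set ι).PairwiseDisjoint T ∧ ∀ j, (S.biUnion T ∩ T j).Nonempty := by
  classical
  have hempty : ∅ ∈ univ.filter fun S : Finset ι => (S : Set ι).PairwiseDisjoint T := by simp
  obtain ⟨S, hS, hmax⟩ := exists_max_image _ card ⟨_, hempty⟩
  have hSdisj : (S : Set ι).PairwiseDisjoint T := (mem_filter.mp hS).2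
  refine ⟨S, hSdisj, fun j => ?_⟩
  by_contra hmiss
  have hdisj : ∀ i ∈ S, Disjoint (T i) (T j) := fun i hi =>
    disjoint_left.mpr fun x hxi hxj =>
      hmiss ⟨x, mem_inter.mpr ⟨mem_biUnion.mpr ⟨i, hi, hxi⟩, hxj⟩⟩
  have hjS : j ∉ S := fun hj => (hT j).ne_empty (disjoint_self.mp (hdisj j hj))
  have hinsert : insert j S ∈ univ.filter fun S : Finset ι => (S : Set ι).PairwiseDisjoint T := by
    refine mem_filter.mpr ⟨mem_univ _, ?_⟩
    rw [coe_insert]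
    exact hSdisj.insert fun i hi _ => (hdisj i hi).symm
  have := hmax _ hinsert
  rw [card_insert_of_notMem hjS] at this
  omega

theorem card_mul_le_card_of_pairwiseDisjoint [Fintype α] {S : Finset ι}
    (hS : (S : Set ι).PairwiseDisjoint T) {m : ℝ} (hm : ∀ i ∈ S, m ≤ (T i).card) :
    S.card * m ≤ Fintype.card α := by
  calc (S.card : ℝ) * m = ∑ _i ∈ S, m := by rw [sum_const, nsmul_eq_mul]
    _ ≤ ∑ i ∈ S, ((T i).card : ℝ) := sum_le_sum hm
    _ = (S.biUnion T).card := by rw [card_biUnion hS, Nat.cast_sum]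
    _ ≤ Fintype.card α := by exact_mod_cast card_le_univ _

end DisjointSubfamily

theorem le_sqrt_of_mul_sqrt_le {x n : ℝ} (hn : 0 < n) (h : x * √n ≤ n) : x ≤ √n := by
  have hsqrt : 0 < √n := Real.sqrt_pos.mpr hn
  nlinarith [Real.mul_self_sqrt hn.le]

theorem floor_two_mul_sqrt_le {n : ℕ} (hn : 4 ≤ n) : ⌊2 * √(n : ℝ)⌋₊ ≤ n := by
  apply Nat.floor_le_of_le
  have htwo : 2 ≤ √(n : ℝ) := Real.le_sqrt_of_sq_le (by exact_mod_cast hn)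
  calc 2 * √(n : ℝ) ≤ √n * √n := by gcongr
    _ = n := Real.mul_self_sqrt n.cast_nonneg

/-- Let `n ≥ 4` and `T_1, …, T_n ⊆ [n]` each of size at least `√n`. Then there is a subset
`S ⊆ [n]` of size `⌊2√n⌋` such that `⋃_{i ∈ S} T_i` intersects every `T_j`. -/
theorem stmt1 (n : ℕ) (hn : 4 ≤ n) (T : Fin n → Finset (Fin n))
    (hT : ∀ i, Real.sqrt n ≤ (T i).card) :
    ∃ S : Finset (Fin n), S.card = ⌊2 * Real.sqrt n⌋₊ ∧
      ∀ j, ((S.biUnion T) ∩ T j).Nonempty := by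
  have hnpos : (0 : ℝ) < n := by positivity
  have hTne : ∀ i, (T i).Nonempty := fun i =>
    card_pos.mp (by exact_mod_cast (Real.sqrt_pos.mpr hnpos).trans_le (hT i))
  obtain ⟨S, hSdisj, hShits⟩ := exists_pairwiseDisjoint_forall_biUnion_inter_nonempty T hTne
  have hScard : S.card ≤ ⌊2 * √(n : ℝ)⌋₊ := by
    have hmul := card_mul_le_card_of_pairwiseDisjoint T hSdisj fun i _ => hT i
    rw [Fintype.card_fin] at hmul
    apply Nat.le_floor
    linarith [le_sqrt_of_mul_sqrt_le hnpos hmul, Real.sqrt_nonneg (n : ℝ)]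
  obtain ⟨S', hSS', -, hS'card⟩ := exists_subsuperset_card_eq (subset_univ S) hScard
    (by simpa using floor_two_mul_sqrt_le hn)
  exact ⟨S', hS'card, fun j => (hShits j).mono (inter_subset_inter_right (biUnion_subset_biUnion_of_subset_left T hSS'))⟩
end
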